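/- rot(P^n(B)) is a factor of P^(n+1)(A) for every n, where rot is the rotation A ↦ B, B ↦ C, C ↦ A. -/

import Mathlib

inductive T where
  | A | B | C
deriving DecidableEq, Repr

open T

def P : T → List T
  | A => [A,B,C,B,A,C,B,C,A,B,C,B,A]
  | B => [B,C,A,C,B,A,C,A,B,C,A,C,B]
  | C => [C,A,B,A,C,B,A,B,C,A,B,A,C]

def Pw (w : List T) : List T := w.flatMap P

def SqFree (w : List T) : Prop := ∀ x : List T, x ≠ [] → ¬ (x ++ x) <:+: w

def rot : T → T
  | A => B
  | B => C
  | C => A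

def rotw (w : List T) : List T := w.map rot

def refT : T → T
  | A => A
  | B => C
  | C => B

def reflw (w : List T) : List T := w.map refT

def OccursAt (w v : List T) (i : ℕ) : Prop := (v.drop i).take w.length = w

/-! The rotation commutes with the Leech substitution, since `P (rot a) = rot (P a)` letter by
letter. Hence `rot (Pⁿ(B)) = Pⁿ(C)`, and as `C` is a factor of `P(A)`, applying `Pⁿ` (which
preserves factors) shows that `Pⁿ(C)` is a factor of `Pⁿ(P(A)) = Pⁿ⁺¹(A)`. -/

theorem P_rot (a : T) : P (rot a) = (P a).map rot := by
  cases a <;> rfl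

theorem commute_rotw_Pw : Function.Commute rotw Pw := fun w => by
  simp only [rotw, Pw, List.map_flatMap, List.flatMap_map, P_rot]

theorem Pw_iterate_infix {u v : List T} (h : u <:+: v) (n : ℕ) : Pw^[n] u <:+: Pw^[n] v := by
  induction n with
  | zero => exact h
  | succ n ih =>
    rw [Function.iterate_succ_apply', Function.iterate_succ_apply']
    exact ih.flatMap P

theorem C_infix_Pw_A : [C] <:+: Pw [A] := ⟨[A, B], [B, A, C, B, C, A, B, C, B, A], rfl⟩

theorem stmt8 (n : ℕ) : rotw (Pw^[n] [B]) <:+: Pw^[n + 1] [A] := by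
  rw [(commute_rotw_Pw.iterate_right n).eq, Function.iterate_succ_apply]
  exact Pw_iterate_infix C_infix_Pw_A n
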